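/- Any closed billiard path in an m₁×m₂ grid hits the boundary exactly 2(m₁+m₂)/gcd(m₁,m₂) times per period. Equivalently, writing K = 2·lcm(m₁,m₂), the number of k ∈ {0,...,K−1} for which the triangle wave T₁(k) ∈ {0, m₁} or T₂(k) ∈ {0, m₂} equals 2(m₁+m₂)/gcd(m₁,m₂), provided the starting point lies on a closed path (i.e., the path does not pass through a corner). -/

import Mathlib

/-
Along each axis the billiard coordinate is a triangle wave of period `2 mᵢ`, and it lies on the
boundary exactly when `mᵢ ∣ xᵢ + k`. Over `K = 2 lcm(m₁, m₂)` steps each axis therefore hits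
the boundary `K / mᵢ` times, and since there are no corner hits the two sets of times are
disjoint, giving `K / m₁ + K / m₂ = 2 (m₁ + m₂) / gcd(m₁, m₂)` hits.
-/

open Finset

-- Unfolding the reflections, the coordinate after `k` steps from `x` is `triangleWave m (x + k)`.
def triangleWave (m : ℕ) (y : ℤ) : ℤ := m - |(m : ℤ) - y % (2 * m)|

lemma triangleWave_eq_zero_or_eq_iff_dvd {m : ℕ} (hm : 0 < m) (y : ℤ) :
    triangleWave m y = 0 ∨ triangleWave m y = m ↔ (m : ℤ) ∣ y := by
  have hr₀ : 0 ≤ y % (2 * m) := Int.emod_nonneg _ (by omega)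
  have hr₁ : y % (2 * m) < 2 * m := Int.emod_lt_of_pos _ (by omega)
  have hdvd : (m : ℤ) ∣ y ↔ (m : ℤ) ∣ y % (2 * m) := by
    rw [Int.dvd_iff_emod_eq_zero, Int.dvd_iff_emod_eq_zero,
      Int.emod_emod_of_dvd _ (dvd_mul_left _ _)]
  rw [hdvd, triangleWave]
  generalize y % (2 * m) = r at hr₀ hr₁
  have hdvd_iff : (m : ℤ) ∣ r ↔ r = 0 ∨ r = m := by
    refine ⟨fun ⟨t, ht⟩ => ?_, by rintro (rfl | rfl) <;> simp⟩
    have : 0 ≤ t := by nlinarith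
    have : t < 2 := by nlinarith
    interval_cases t <;> simp [ht]
  rw [hdvd_iff]
  rcases abs_cases ((m : ℤ) - r) with ⟨ha, _⟩ | ⟨ha, _⟩ <;> rw [ha] <;> omega

lemma card_filter_modEq_range_mul {m : ℕ} (hm : 0 < m) (c v : ℕ) :
    #{k ∈ range (c * m) | k ≡ v [MOD m]} = c := by
  rw [← Nat.count_eq_card_filter_range, Nat.count_modEq_card _ hm]
  simp [Nat.mul_mod_left, Nat.mul_div_cancel _ hm]

lemma card_filter_dvd_add_range_mul {m : ℕ} (hm : 0 < m) (x : ℤ) (c : ℕ) :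
    #{k ∈ range (c * m) | (m : ℤ) ∣ x + (k : ℕ)} = c := by
  have hv : 0 ≤ (-x) % m := Int.emod_nonneg _ (by omega)
  refine .trans (congrArg card (filter_congr fun k _ => ?_))
    (card_filter_modEq_range_mul hm c ((-x) % m).toNat)
  rw [← Int.natCast_modEq_iff, Int.toNat_of_nonneg hv, Int.ModEq, Int.emod_emod, ← Int.ModEq,
    Int.modEq_iff_dvd, ← dvd_neg, neg_add']

lemma lcm_eq_div_gcd_mul_left (m n : ℕ) : Nat.lcm m n = n / Nat.gcd m n * m := by
  rw [Nat.lcm, Nat.mul_div_assoc _ (Nat.gcd_dvd_right m n), mul_comm]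

lemma lcm_eq_div_gcd_mul_right (m n : ℕ) : Nat.lcm m n = m / Nat.gcd m n * n := by
  rw [Nat.lcm, Nat.mul_div_right_comm (Nat.gcd_dvd_left m n)]

lemma two_mul_add_div_gcd (m n : ℕ) :
    2 * (m + n) / Nat.gcd m n = 2 * (n / Nat.gcd m n) + 2 * (m / Nat.gcd m n) := by
  rw [Nat.mul_div_assoc _ (dvd_add (Nat.gcd_dvd_left m n) (Nat.gcd_dvd_right m n)),
    Nat.add_div_of_dvd_left (Nat.gcd_dvd_right m n), mul_add, add_comm]

theorem boundary_hits_count_general (m₁ m₂ : ℕ) (hm₁ : 0 < m₁) (hm₂ : 0 < m₂)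
    (x₁ x₂ : ℤ)
    (T₁ T₂ : ℤ → ℤ)
    (hT₁ : ∀ k : ℤ, T₁ k = m₁ - |(m₁ : ℤ) - ((x₁ + k) % (2 * m₁))|)
    (hT₂ : ∀ k : ℤ, T₂ k = m₂ - |(m₂ : ℤ) - ((x₂ + k) % (2 * m₂))|)
    (hNoCorner : ∀ k : ℤ, ¬((T₁ k = 0 ∨ T₁ k = m₁) ∧ (T₂ k = 0 ∨ T₂ k = m₂))) :
    ((Finset.range (2 * Nat.lcm m₁ m₂)).filter
        (fun k : ℕ => T₁ k = 0 ∨ T₁ k = m₁ ∨ T₂ k = 0 ∨ T₂ k = m₂)).card =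
      2 * (m₁ + m₂) / Nat.gcd m₁ m₂ := by
  have hit₁ (k : ℤ) : T₁ k = 0 ∨ T₁ k = m₁ ↔ (m₁ : ℤ) ∣ x₁ + k :=
    hT₁ k ▸ triangleWave_eq_zero_or_eq_iff_dvd hm₁ (x₁ + k)
  have hit₂ (k : ℤ) : T₂ k = 0 ∨ T₂ k = m₂ ↔ (m₂ : ℤ) ∣ x₂ + k :=
    hT₂ k ▸ triangleWave_eq_zero_or_eq_iff_dvd hm₂ (x₂ + k)
  have hdisj : Disjoint {k ∈ range (2 * Nat.lcm m₁ m₂) | (m₁ : ℤ) ∣ x₁ + (k : ℕ)}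
      {k ∈ range (2 * Nat.lcm m₁ m₂) | (m₂ : ℤ) ∣ x₂ + (k : ℕ)} :=
    disjoint_filter.2 fun k _ h₁ h₂ => hNoCorner k ⟨(hit₁ k).2 h₁, (hit₂ k).2 h₂⟩
  calc _ = #{k ∈ range (2 * Nat.lcm m₁ m₂) |
          (m₁ : ℤ) ∣ x₁ + (k : ℕ) ∨ (m₂ : ℤ) ∣ x₂ + (k : ℕ)} := by
        simp only [← or_assoc, ← hit₁, ← hit₂]
    _ = 2 * (m₂ / Nat.gcd m₁ m₂) + 2 * (m₁ / Nat.gcd m₁ m₂) := by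
        rw [filter_or, card_union_of_disjoint hdisj]
        congr 1
        · rw [lcm_eq_div_gcd_mul_left, ← mul_assoc, card_filter_dvd_add_range_mul hm₁]
        · rw [lcm_eq_div_gcd_mul_right, ← mul_assoc, card_filter_dvd_add_range_mul hm₂]
    _ = 2 * (m₁ + m₂) / Nat.gcd m₁ m₂ := (two_mul_add_div_gcd m₁ m₂).symm

theorem boundary_hits_count (m₁ m₂ : ℕ) (hm₁ : 0 < m₁) (hm₂ : 0 < m₂)
    (x₁ x₂ : ℤ) (hx₁ : 0 ≤ x₁ ∧ x₁ ≤ m₁) (hx₂ : 0 ≤ x₂ ∧ x₂ ≤ m₂)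
    (T₁ T₂ : ℤ → ℤ)
    (hT₁ : ∀ k : ℤ, T₁ k = m₁ - |(m₁ : ℤ) - ((x₁ + k) % (2 * m₁))|)
    (hT₂ : ∀ k : ℤ, T₂ k = m₂ - |(m₂ : ℤ) - ((x₂ + k) % (2 * m₂))|)
    (hNoCorner : ∀ k : ℤ, ¬((T₁ k = 0 ∨ T₁ k = m₁) ∧ (T₂ k = 0 ∨ T₂ k = m₂))) :
    ((Finset.range (2 * Nat.lcm m₁ m₂)).filter
        (fun k : ℕ => T₁ k = 0 ∨ T₁ k = m₁ ∨ T₂ k = 0 ∨ T₂ k = m₂)).card =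
      2 * (m₁ + m₂) / Nat.gcd m₁ m₂ :=
  boundary_hits_count_general m₁ m₂ hm₁ hm₂ x₁ x₂ T₁ T₂ hT₁ hT₂ hNoCorner
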